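/- Let n ≥ 2 be an integer. For every unitary matrix U ∈ U(n+1) there exists a holomorphic map f = (f₁, f_{2,1}, …, f_{2,n}) : Δ → ℂ^{n+1} with |f₁(w)| < 1 and ∑_{j=1}^n |f_{2,j}(w)|² < 1 on Δ, f(0) = 0, such that U · (f₁(w), f_{2,1}(w), …, f_{2,n}(w))ᵗ = (w, f₁(w) f_{2,1}(w), …, f₁(w) f_{2,n}(w))ᵗ for all w ∈ Δ; consequently (1 − |f₁(w)|²)(1 − ∑_{j=1}^n |f_{2,j}(w)|²) = 1 − |w|² on Δ, i.e. f is a holomorphic isometry from (Δ, g_Δ) into (Δ, g_Δ) × (𝔹^n, g_{𝔹^n}). -/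

import Mathlib

/-!
Let `P = diag(0, 1, …, 1)`. Since `U` is unitary, `U - ζ P` is invertible for `|ζ| < 1`, and
`W(ζ) = (U - ζ P)⁻¹ e₀` satisfies `U W = e₀ + ζ P W`; comparing norms shows that `ψ = W₀` maps the
disk holomorphically into the closed disk. If `ζ = f₁(w)` solves `ζ = w ψ(ζ)`, then `f = w W(ζ)`
has first coordinate `f₁` and satisfies `U f = (w, f₁ f₂)`, and comparing norms once more gives the
isometry equation.

By Schwarz–Pick, `ψ` does not increase the pseudo-hyperbolic distance while multiplication by `w`
strictly decreases it, so `ζ = w ψ(ζ)` has at most one solution, at which `w ψ'(ζ) ≠ 1`; the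
implicit function theorem then gives local holomorphic branches. As `|ζ| ≤ |w|`, solutions cannot
reach the boundary, so the set of solvable `w` is open and closed in the disk. When `|ψ|` reaches
`1`, `ψ` is a unimodular constant `c` and `ζ = c w`.
-/

open Metric Set Filter Topology ComplexConjugate Matrix

section Mobius

/-- `‖mobius a z‖` is the pseudo-hyperbolic distance between `a` and `z`. -/
noncomputable def mobius (a z : ℂ) : ℂ := (z - a) / (1 - conj a * z)

variable {a b z w : ℂ}

@[simp] theorem mobius_self (a : ℂ) : mobius a a = 0 := by simp [mobius]

@[simp] theorem mobius_neg_zero (a : ℂ) : mobius (-a) 0 = a := by simp [mobius]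

theorem one_sub_conj_mul_ne_zero (ha : ‖a‖ < 1) (hz : ‖z‖ < 1) : 1 - conj a * z ≠ 0 := by
  refine sub_ne_zero.2 fun h => ?_
  have : ‖conj a * z‖ < 1 := by
    rw [norm_mul, Complex.norm_conj]
    nlinarith [norm_nonneg a, norm_nonneg z]
  rw [← h, norm_one] at this
  exact this.false

theorem norm_one_sub_conj_mul_self (ha : ‖a‖ < 1) : ‖1 - conj a * a‖ = 1 - ‖a‖ ^ 2 := by
  rw [Complex.conj_mul', ← Complex.ofReal_pow, ← Complex.ofReal_one, ← Complex.ofReal_sub,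
    Complex.norm_real, Real.norm_of_nonneg (by nlinarith [norm_nonneg a])]

theorem sq_norm_one_sub_conj_mul_sub_sq_norm_sub (a z : ℂ) :
    ‖1 - conj a * z‖ ^ 2 - ‖z - a‖ ^ 2 = (1 - ‖a‖ ^ 2) * (1 - ‖z‖ ^ 2) := by
  simp only [Complex.sq_norm, Complex.normSq_apply, Complex.sub_re, Complex.sub_im, Complex.mul_re,
    Complex.mul_im, Complex.one_re, Complex.one_im, Complex.conj_re, Complex.conj_im]
  ring

theorem norm_mobius_lt_one (ha : ‖a‖ < 1) (hz : ‖z‖ < 1) : ‖mobius a z‖ < 1 := by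
  rw [mobius, norm_div, div_lt_one (norm_pos_iff.2 (one_sub_conj_mul_ne_zero ha hz))]
  have := sq_norm_one_sub_conj_mul_sub_sq_norm_sub a z
  have : 0 < (1 - ‖a‖ ^ 2) * (1 - ‖z‖ ^ 2) :=
    mul_pos (by nlinarith [norm_nonneg a]) (by nlinarith [norm_nonneg z])
  exact lt_of_pow_lt_pow_left₀ 2 (norm_nonneg _) (by linarith)

theorem mapsTo_mobius (ha : ‖a‖ < 1) : MapsTo (mobius a) (ball 0 1) (ball 0 1) := fun z hz => by
  rw [mem_ball_zero_iff] at hz ⊢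
  exact norm_mobius_lt_one ha hz

theorem differentiableOn_mobius (ha : ‖a‖ < 1) : DifferentiableOn ℂ (mobius a) (ball 0 1) :=
  fun _ hz => ((differentiableAt_id.sub_const a).div
    ((differentiableAt_const 1).sub (differentiableAt_id.const_mul _))
    (one_sub_conj_mul_ne_zero ha (mem_ball_zero_iff.1 hz))).differentiableWithinAt

theorem mobius_neg_mobius (ha : ‖a‖ < 1) (hz : ‖z‖ < 1) : mobius (-a) (mobius a z) = z := by
  have hd := one_sub_conj_mul_ne_zero ha hz
  have haa := one_sub_conj_mul_ne_zero ha ha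
  rw [mobius, mobius, map_neg, neg_mul, sub_neg_eq_add, sub_neg_eq_add, div_add' _ _ _ hd,
    mul_div_assoc', one_add_div hd, div_div_div_cancel_right₀ hd, div_eq_iff]
  · ring
  · convert haa using 1; ring

theorem norm_mobius_mul_lt (hw : ‖w‖ < 1) (ha : ‖a‖ < 1) (hb : ‖b‖ < 1) (hab : a ≠ b) :
    ‖mobius (w * a) (w * b)‖ < ‖mobius a b‖ := by
  have key : ‖1 - conj (w * a) * (w * b)‖ ^ 2 - ‖w‖ ^ 2 * ‖1 - conj a * b‖ ^ 2
      = (1 - ‖w‖ ^ 2) * (1 - ‖w‖ ^ 2 * ‖a‖ ^ 2 * ‖b‖ ^ 2) := by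
    simp only [Complex.sq_norm, Complex.normSq_apply, Complex.sub_re, Complex.sub_im,
      Complex.mul_re, Complex.mul_im, Complex.one_re, Complex.one_im, Complex.conj_re,
      Complex.conj_im]
    ring
  have hpos : 0 < (1 - ‖w‖ ^ 2) * (1 - ‖w‖ ^ 2 * ‖a‖ ^ 2 * ‖b‖ ^ 2) := by
    have : ‖w‖ ^ 2 * ‖a‖ ^ 2 * ‖b‖ ^ 2 < 1 := by
      have h1 : ‖w‖ ^ 2 < 1 := by nlinarith [norm_nonneg w]
      have h2 : ‖a‖ ^ 2 < 1 := by nlinarith [norm_nonneg a]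
      have h3 : ‖b‖ ^ 2 < 1 := by nlinarith [norm_nonneg b]
      have := mul_lt_one_of_nonneg_of_lt_one_left (by positivity) h1 h2.le
      exact mul_lt_one_of_nonneg_of_lt_one_left (by positivity) this h3.le
    exact mul_pos (by nlinarith [norm_nonneg w]) (by linarith)
  have hD : 0 < ‖1 - conj a * b‖ := norm_pos_iff.2 (one_sub_conj_mul_ne_zero ha hb)
  have hlt : ‖w‖ * ‖1 - conj a * b‖ < ‖1 - conj (w * a) * (w * b)‖ :=
    lt_of_pow_lt_pow_left₀ 2 (norm_nonneg _) (by rw [mul_pow]; linarith)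
  have hba : 0 < ‖b - a‖ := norm_pos_iff.2 (sub_ne_zero.2 hab.symm)
  rw [mobius, mobius, norm_div, norm_div, ← mul_sub, norm_mul,
    div_lt_div_iff₀ ((mul_nonneg (norm_nonneg _) hD.le).trans_lt hlt) hD]
  nlinarith

end Mobius

section SchwarzPick

variable {ψ : ℂ → ℂ} {x y : ℂ}

theorem norm_mobius_le (hd : DifferentiableOn ℂ ψ (ball 0 1)) (hm : MapsTo ψ (ball 0 1) (ball 0 1))
    (hx : ‖x‖ < 1) (hy : ‖y‖ < 1) : ‖mobius (ψ x) (ψ y)‖ ≤ ‖mobius x y‖ := by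
  have hψx : ‖ψ x‖ < 1 := mem_ball_zero_iff.1 (hm (mem_ball_zero_iff.2 hx))
  have hx' : ‖-x‖ < 1 := by rwa [norm_neg]
  -- Schwarz's lemma for the conjugate of `ψ` that fixes the origin
  have := Complex.norm_le_norm_of_mapsTo_ball (f := mobius (ψ x) ∘ ψ ∘ mobius (-x))
    ((differentiableOn_mobius hψx).comp (hd.comp (differentiableOn_mobius hx') (mapsTo_mobius hx'))
      (hm.comp (mapsTo_mobius hx')))
    (((mapsTo_mobius hψx).comp (hm.comp (mapsTo_mobius hx'))).mono_right ball_subset_closedBall)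
    (by simp) (norm_mobius_lt_one hx hy)
  simpa [mobius_neg_mobius hx hy] using this

theorem norm_deriv_mul_le (hd : DifferentiableOn ℂ ψ (ball 0 1))
    (hm : MapsTo ψ (ball 0 1) (ball 0 1)) (hx : ‖x‖ < 1) :
    ‖deriv ψ x‖ * (1 - ‖x‖ ^ 2) ≤ 1 - ‖ψ x‖ ^ 2 := by
  have hxb : ball (0 : ℂ) 1 ∈ 𝓝 x := isOpen_ball.mem_nhds (mem_ball_zero_iff.2 hx)
  have hψx : ‖ψ x‖ < 1 := mem_ball_zero_iff.1 (hm (mem_of_mem_nhds hxb))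
  have hdx := hd.differentiableAt hxb
  have key : ∀ᶠ y in 𝓝[≠] x, ‖slope ψ x y‖ * ‖1 - conj x * y‖ ≤ ‖1 - conj (ψ x) * ψ y‖ := by
    filter_upwards [self_mem_nhdsWithin, nhdsWithin_le_nhds hxb] with y hyx hy
    have hy : ‖y‖ < 1 := mem_ball_zero_iff.1 hy
    have hψy : ‖ψ y‖ < 1 := mem_ball_zero_iff.1 (hm (mem_ball_zero_iff.2 hy))
    have h := norm_mobius_le hd hm hx hy
    rw [mobius, mobius, norm_div, norm_div,
      div_le_div_iff₀ (norm_pos_iff.2 (one_sub_conj_mul_ne_zero hψx hψy))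
        (norm_pos_iff.2 (one_sub_conj_mul_ne_zero hx hy))] at h
    rw [slope_def_field, norm_div, div_mul_eq_mul_div,
      div_le_iff₀ (norm_pos_iff.2 (sub_ne_zero.2 hyx))]
    linarith
  have hlim : ‖deriv ψ x‖ * ‖1 - conj x * x‖ ≤ ‖1 - conj (ψ x) * ψ x‖ := le_of_tendsto_of_tendsto
    (hdx.hasDerivAt.tendsto_slope.norm.mul (tendsto_nhdsWithin_of_tendsto_nhds
      ((continuous_const.sub (continuous_const.mul continuous_id)).norm.tendsto x)))
    (tendsto_nhdsWithin_of_tendsto_nhds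
      (continuousAt_const.sub (continuousAt_const.mul hdx.continuousAt)).norm) key
  rwa [norm_one_sub_conj_mul_self hx, norm_one_sub_conj_mul_self hψx] at hlim

end SchwarzPick

theorem exists_implicit_function {F : ℂ × ℂ → ℂ} {F' : ℂ × ℂ →L[ℂ] ℂ} {u : ℂ × ℂ}
    (hF : HasStrictFDerivAt F F' u) (hF' : F' (0, 1) ≠ 0) :
    ∃ t : ℂ → ℂ, DifferentiableAt ℂ t u.1 ∧ t u.1 = u.2 ∧ ∀ᶠ w in 𝓝 u.1, F (w, t w) = F u := by
  have hinv : (F' ∘L ContinuousLinearMap.inr ℂ ℂ ℂ).IsInvertible := by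
    refine ⟨ContinuousLinearEquiv.unitsEquivAut ℂ (Units.mk0 _ hF'), ?_⟩
    ext
    simp
  exact ⟨hF.implicitFunctionOfProdDomain hinv,
    (hF.hasStrictFDerivAt_implicitFunctionOfProdDomain hinv).differentiableAt,
    (hF.eventually_apply_eq_iff_implicitFunctionOfProdDomain hinv).self_of_nhds.1 rfl,
    hF.eventually_apply_implicitFunctionOfProdDomain hinv⟩

theorem isClosed_setOf_exists_eq_mul_comp {ψ : ℂ → ℂ} {K : Set ℂ} (hK : IsCompact K)
    (hψ : ContinuousOn ψ K) : IsClosed {w | w ∈ K ∧ ∃ s ∈ K, s = w * ψ s} := by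
  have hcont : ContinuousOn (fun p : ℂ × ℂ => p.2 - p.1 * ψ p.2) (K ×ˢ K) :=
    continuousOn_snd.sub (continuousOn_fst.mul (hψ.comp continuousOn_snd fun p hp => hp.2))
  have hsol : IsCompact (K ×ˢ K ∩ (fun p : ℂ × ℂ => p.2 - p.1 * ψ p.2) ⁻¹' {0}) :=
    (hK.prod hK).of_isClosed_subset
      (hcont.preimage_isClosed_of_isClosed (hK.isClosed.prod hK.isClosed) isClosed_singleton)
      inter_subset_left
  convert (hsol.image continuous_fst).isClosed using 1
  ext w
  simp [sub_eq_zero, and_assoc]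

section FixedPoint

variable {ψ : ℂ → ℂ} {w x y s : ℂ}

theorem eq_of_eq_mul_comp (hd : DifferentiableOn ℂ ψ (ball 0 1))
    (hm : MapsTo ψ (ball 0 1) (ball 0 1)) (hw : ‖w‖ < 1) (hx : ‖x‖ < 1) (hy : ‖y‖ < 1)
    (hxw : x = w * ψ x) (hyw : y = w * ψ y) : x = y := by
  by_contra hxy
  have hψ : ψ x ≠ ψ y := fun h => hxy (by rw [hxw, hyw, h])
  have hlt := norm_mobius_mul_lt hw (mem_ball_zero_iff.1 (hm (mem_ball_zero_iff.2 hx)))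
    (mem_ball_zero_iff.1 (hm (mem_ball_zero_iff.2 hy))) hψ
  rw [← hxw, ← hyw] at hlt
  exact (norm_mobius_le hd hm hx hy).not_gt hlt

theorem mul_deriv_ne_one (hd : DifferentiableOn ℂ ψ (ball 0 1))
    (hm : MapsTo ψ (ball 0 1) (ball 0 1)) (hw : ‖w‖ < 1) (hs : ‖s‖ < 1) (hsw : s = w * ψ s) :
    w * deriv ψ s ≠ 1 := by
  intro h
  have hSP := norm_deriv_mul_le hd hm hs
  have h1 : ‖w‖ * ‖deriv ψ s‖ = 1 := by rw [← norm_mul, h, norm_one]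
  have h2 : ‖s‖ = ‖w‖ * ‖ψ s‖ := by rw [hsw, norm_mul, ← hsw]
  rw [h2] at hSP
  have h3 := mul_le_mul_of_nonneg_left hSP (norm_nonneg w)
  rw [← mul_assoc, h1, one_mul] at h3
  nlinarith [mul_pos (sub_pos.2 hw) (by positivity : 0 < 1 + ‖w‖ * ‖ψ s‖ ^ 2)]

theorem exists_differentiableAt_eventually_eq_mul_comp (hd : DifferentiableOn ℂ ψ (ball 0 1))
    (hm : MapsTo ψ (ball 0 1) (ball 0 1)) (hw : ‖w‖ < 1) (hs : ‖s‖ < 1) (hsw : s = w * ψ s) :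
    ∃ t : ℂ → ℂ, DifferentiableAt ℂ t w ∧ t w = s ∧
      ∀ᶠ v in 𝓝 w, ‖t v‖ < 1 ∧ t v = v * ψ (t v) := by
  have hψ := (hd.analyticAt (isOpen_ball.mem_nhds (mem_ball_zero_iff.2 hs))).hasStrictDerivAt
  have hF := (hasStrictFDerivAt_snd (𝕜 := ℂ) (p := (w, s))).sub (hasStrictFDerivAt_fst.mul
    (hψ.hasStrictFDerivAt.comp (w, s) hasStrictFDerivAt_snd))
  obtain ⟨t, ht, htw, hev⟩ := exists_implicit_function hF
    (by simpa using sub_ne_zero.2 (mul_deriv_ne_one hd hm hw hs hsw).symm)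
  refine ⟨t, ht, htw, ?_⟩
  filter_upwards [hev, (continuous_norm.continuousAt.comp ht.continuousAt).eventually_lt
    continuousAt_const (by simpa [htw] using hs)] with v hv hvt
  have hv : t v - v * ψ (t v) = s - w * ψ s := hv
  rw [← hsw, sub_self, sub_eq_zero] at hv
  exact ⟨hvt, hv⟩

theorem exists_eq_mul_comp (hd : DifferentiableOn ℂ ψ (ball 0 1))
    (hm : MapsTo ψ (ball 0 1) (ball 0 1)) (hw : ‖w‖ < 1) : ∃ s, ‖s‖ < 1 ∧ s = w * ψ s := by
  set S := {w : ℂ | ‖w‖ < 1 ∧ ∃ s, ‖s‖ < 1 ∧ s = w * ψ s}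
  have hopen : IsOpen S := isOpen_iff_mem_nhds.2 fun w ⟨hw, s, hs, hsw⟩ => by
    obtain ⟨t, -, -, hev⟩ := exists_differentiableAt_eventually_eq_mul_comp hd hm hw hs hsw
    filter_upwards [hev, isOpen_ball.mem_nhds (mem_ball_zero_iff.2 hw)] with v hv hvb
    exact ⟨mem_ball_zero_iff.1 hvb, t v, hv⟩
  -- solutions satisfy `‖s‖ ≤ ‖w‖`, so they cannot escape to the boundary
  have hclosed : closure S ∩ ball 0 1 ⊆ S := by
    rintro w ⟨hwS, hw⟩
    obtain ⟨r, hwr, hr⟩ := exists_between (mem_ball_zero_iff.1 hw)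
    have hsub : ball 0 r ∩ S ⊆ {w | w ∈ closedBall 0 r ∧ ∃ s ∈ closedBall 0 r, s = w * ψ s} := by
      rintro v ⟨hvr, -, s, hs, hsv⟩
      have hsv' : ‖s‖ ≤ ‖v‖ := by
        rw [hsv, norm_mul]
        exact mul_le_of_le_one_right (norm_nonneg v)
          (mem_ball_zero_iff.1 (hm (mem_ball_zero_iff.2 hs))).le
      have hvr : ‖v‖ ≤ r := (mem_ball_zero_iff.1 hvr).le
      exact ⟨mem_closedBall_zero_iff.2 hvr, s, mem_closedBall_zero_iff.2 (hsv'.trans hvr), hsv⟩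
    have hcl := (isClosed_setOf_exists_eq_mul_comp (isCompact_closedBall 0 r)
      (hd.continuousOn.mono (closedBall_subset_ball hr))).closure_subset_iff.2 hsub
    obtain ⟨-, s, hs, hsw⟩ := hcl (isOpen_ball.inter_closure ⟨mem_ball_zero_iff.2 hwr, hwS⟩)
    exact ⟨mem_ball_zero_iff.1 hw, s, (mem_closedBall_zero_iff.1 hs).trans_lt hr, hsw⟩
  have hsolv := (convex_ball (0 : ℂ) 1).isPreconnected.subset_of_closure_inter_subset hopen
    ⟨0, mem_ball_self one_pos, by simp, 0, by simp⟩ hclosed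
  exact (hsolv (mem_ball_zero_iff.2 hw)).2

theorem exists_differentiableOn_eq_mul_comp_of_mapsTo_ball (hd : DifferentiableOn ℂ ψ (ball 0 1))
    (hm : MapsTo ψ (ball 0 1) (ball 0 1)) :
    ∃ f : ℂ → ℂ, DifferentiableOn ℂ f (ball 0 1) ∧
      ∀ w ∈ ball (0 : ℂ) 1, ‖f w‖ < 1 ∧ f w = w * ψ (f w) := by
  choose! f hf using fun w (hw : w ∈ ball (0 : ℂ) 1) =>
    exists_eq_mul_comp hd hm (mem_ball_zero_iff.1 hw)
  refine ⟨f, fun w hw => ?_, hf⟩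
  obtain ⟨t, ht, htw, hev⟩ :=
    exists_differentiableAt_eventually_eq_mul_comp hd hm (mem_ball_zero_iff.1 hw) (hf w hw).1
      (hf w hw).2
  have hft : f =ᶠ[𝓝 w] t := by
    filter_upwards [hev, isOpen_ball.mem_nhds hw] with v hv hvb
    exact eq_of_eq_mul_comp hd hm (mem_ball_zero_iff.1 hvb) (hf v hvb).1 hv.1 (hf v hvb).2 hv.2
  exact (ht.congr_of_eventuallyEq hft).differentiableWithinAt

theorem exists_differentiableOn_eq_mul_comp (hd : DifferentiableOn ℂ ψ (ball 0 1))
    (hm : MapsTo ψ (ball 0 1) (closedBall 0 1)) :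
    ∃ f : ℂ → ℂ, DifferentiableOn ℂ f (ball 0 1) ∧
      ∀ w ∈ ball (0 : ℂ) 1, ‖f w‖ < 1 ∧ f w = w * ψ (f w) := by
  by_cases hm' : MapsTo ψ (ball 0 1) (ball 0 1)
  · exact exists_differentiableOn_eq_mul_comp_of_mapsTo_ball hd hm'
  -- otherwise `‖ψ‖` attains its maximum `1` inside the disk, so `ψ` is a constant
  obtain ⟨z, hz, hψz⟩ := not_forall₂.1 hm'
  have hnorm : ‖ψ z‖ = 1 :=
    le_antisymm (mem_closedBall_zero_iff.1 (hm hz)) (not_lt.1 (by simpa using hψz))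
  have hconst := Complex.eqOn_of_isPreconnected_of_isMaxOn_norm
    (convex_ball (0 : ℂ) 1).isPreconnected isOpen_ball hd hz
    fun v hv => (mem_closedBall_zero_iff.1 (hm hv)).trans hnorm.ge
  refine ⟨fun w => ψ z * w, (differentiable_id.const_mul _).differentiableOn, fun w hw => ?_⟩
  have hw' : ‖ψ z * w‖ < 1 := by rwa [norm_mul, hnorm, one_mul, ← mem_ball_zero_iff]
  exact ⟨hw', by rw [hconst (mem_ball_zero_iff.2 hw'), Function.const_apply, mul_comm]⟩

end FixedPoint

theorem sum_norm_sq_mulVec_of_mem_unitaryGroup {ι 𝕜 : Type*} [Fintype ι] [DecidableEq ι]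
    [RCLike 𝕜] {U : Matrix ι ι 𝕜} (hU : U ∈ unitaryGroup ι 𝕜) (v : ι → 𝕜) :
    ∑ i, ‖(U *ᵥ v) i‖ ^ 2 = ∑ i, ‖v i‖ ^ 2 := by
  have h := ContinuousLinearMap.norm_map_of_mem_unitary
    (Unitary.map_mem (toEuclideanCLM (n := ι) (𝕜 := 𝕜)) hU) (WithLp.toLp 2 v)
  rw [toEuclideanCLM_toLp, EuclideanSpace.norm_eq, EuclideanSpace.norm_eq] at h
  exact (Real.sqrt_inj (by positivity) (by positivity)).1 h

section Transfer

variable {n : ℕ} {U : Matrix (Fin (n + 1)) (Fin (n + 1)) ℂ}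

theorem sq_norm_add_sum_eq_of_mulVec_cons (hU : U ∈ unitaryGroup (Fin (n + 1)) ℂ) {a b ζ : ℂ}
    {x : Fin n → ℂ} (h : U *ᵥ Fin.cons a x = Fin.cons b (ζ • x)) :
    ‖a‖ ^ 2 + ∑ j, ‖x j‖ ^ 2 = ‖b‖ ^ 2 + ‖ζ‖ ^ 2 * ∑ j, ‖x j‖ ^ 2 := by
  have := sum_norm_sq_mulVec_of_mem_unitaryGroup hU (Fin.cons a x)
  simpa [h, Fin.sum_univ_succ, mul_pow, Finset.mul_sum, eq_comm] using this

variable (n) in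
noncomputable def tailProjection : Matrix (Fin (n + 1)) (Fin (n + 1)) ℂ :=
  diagonal (Fin.cons 0 1)

theorem tailProjection_mulVec (v : Fin (n + 1) → ℂ) :
    tailProjection n *ᵥ v = Fin.cons 0 (Fin.tail v) := by
  ext i
  refine Fin.cases ?_ (fun j => ?_) i <;> simp [tailProjection, mulVec_diagonal, Fin.tail]

theorem isUnit_det_sub_smul_tailProjection (hU : U ∈ unitaryGroup (Fin (n + 1)) ℂ) {ζ : ℂ}
    (hζ : ‖ζ‖ < 1) : IsUnit (U - ζ • tailProjection n).det := by
  refine isUnit_iff_ne_zero.2 fun hdet => ?_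
  obtain ⟨v, hv, hUv⟩ := exists_mulVec_eq_zero_iff.2 hdet
  rw [sub_mulVec, smul_mulVec, sub_eq_zero, tailProjection_mulVec, ← Fin.cons_self_tail v,
    Fin.tail_cons] at hUv
  have h := sq_norm_add_sum_eq_of_mulVec_cons hU (b := 0) (ζ := ζ) (hUv.trans (by
    ext i; refine Fin.cases ?_ (fun j => ?_) i <;> simp))
  rw [norm_zero] at h
  have hS : ∑ j, ‖Fin.tail v j‖ ^ 2 = 0 := by
    have : 0 ≤ ∑ j, ‖Fin.tail v j‖ ^ 2 := by positivity
    have hζ2 : ‖ζ‖ ^ 2 < 1 := by nlinarith [norm_nonneg ζ]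
    nlinarith [sq_nonneg ‖v 0‖]
  refine hv (funext fun i => Fin.cases ?_ (fun j => ?_) i)
  · simpa [hS] using h
  · simpa [Fin.tail] using (Finset.sum_eq_zero_iff_of_nonneg (fun _ _ => by positivity)).1 hS j
      (Finset.mem_univ _)

theorem one_sub_sq_norm_mul_one_sub_sum_eq_of_mulVec_cons (hU : U ∈ unitaryGroup (Fin (n + 1)) ℂ)
    {a b : ℂ} {x : Fin n → ℂ} (h : U *ᵥ Fin.cons a x = Fin.cons b (a • x)) :
    (1 - ‖a‖ ^ 2) * (1 - ∑ j, ‖x j‖ ^ 2) = 1 - ‖b‖ ^ 2 := by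
  linear_combination -(sq_norm_add_sum_eq_of_mulVec_cons hU h)

variable (U) in
noncomputable def transferVector (ζ : ℂ) : Fin (n + 1) → ℂ :=
  (U - ζ • tailProjection n)⁻¹ *ᵥ Pi.single 0 1

theorem mulVec_transferVector (hU : U ∈ unitaryGroup (Fin (n + 1)) ℂ) {ζ : ℂ} (hζ : ‖ζ‖ < 1) :
    U *ᵥ transferVector U ζ = Fin.cons 1 (ζ • Fin.tail (transferVector U ζ)) := by
  have h : (U - ζ • tailProjection n) *ᵥ transferVector U ζ = Pi.single 0 1 := by
    rw [transferVector, mulVec_mulVec,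
      mul_nonsing_inv _ (isUnit_det_sub_smul_tailProjection hU hζ), one_mulVec]
  rw [sub_mulVec, smul_mulVec, sub_eq_iff_eq_add, tailProjection_mulVec] at h
  rw [h]
  ext i
  refine Fin.cases ?_ (fun j => ?_) i <;> simp

theorem norm_transferVector_zero_le (hU : U ∈ unitaryGroup (Fin (n + 1)) ℂ) {ζ : ℂ}
    (hζ : ‖ζ‖ < 1) : ‖transferVector U ζ 0‖ ≤ 1 := by
  set W := transferVector U ζ
  have h := sq_norm_add_sum_eq_of_mulVec_cons hU (a := W 0) (b := 1) (ζ := ζ) (x := Fin.tail W)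
    (by rw [Fin.cons_self_tail]; exact mulVec_transferVector hU hζ)
  have : 0 ≤ ∑ j, ‖Fin.tail W j‖ ^ 2 := by positivity
  rw [norm_one, one_pow] at h
  have hζ2 : ‖ζ‖ ^ 2 ≤ 1 := by nlinarith [norm_nonneg ζ]
  refine (sq_le_one_iff₀ (norm_nonneg _)).1 ?_
  nlinarith [mul_le_mul_of_nonneg_right hζ2 this]

theorem mulVec_cons_mul_transferVector (hU : U ∈ unitaryGroup (Fin (n + 1)) ℂ) {w ζ : ℂ}
    (hζ : ‖ζ‖ < 1) (hζw : ζ = w * transferVector U ζ 0) :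
    U *ᵥ Fin.cons ζ (fun j => w * transferVector U ζ j.succ)
      = Fin.cons w (ζ • fun j => w * transferVector U ζ j.succ) := by
  have hcons : Fin.cons ζ (fun j => w * transferVector U ζ j.succ) = w • transferVector U ζ := by
    ext i
    refine Fin.cases ?_ (fun j => ?_) i <;> simp [← hζw]
  rw [hcons, mulVec_smul, mulVec_transferVector hU hζ]
  ext i
  refine Fin.cases ?_ (fun j => ?_) i <;> simp [Fin.tail]
  ring

section

attribute [local instance] Matrix.linftyOpNormedAddCommGroup Matrix.linftyOpNormedRing
  Matrix.linftyOpNormedAlgebra Matrix.linftyOpNormedSpace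

theorem differentiableOn_transferVector (hU : U ∈ unitaryGroup (Fin (n + 1)) ℂ)
    (i : Fin (n + 1)) : DifferentiableOn ℂ (fun ζ => transferVector U ζ i) (ball 0 1) := by
  intro ζ hζ
  have hpencil : DifferentiableAt ℂ (fun ζ : ℂ => U - ζ • tailProjection n) ζ := by fun_prop
  have hinv : DifferentiableAt ℂ (fun ζ => (U - ζ • tailProjection n)⁻¹) ζ := by
    simp_rw [nonsing_inv_eq_ringInverse]
    exact (differentiableAt_inverse ((isUnit_iff_isUnit_det _).2
      (isUnit_det_sub_smul_tailProjection hU (mem_ball_zero_iff.1 hζ)))).comp ζ hpencil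
  have hentry : Differentiable ℂ fun M : Matrix (Fin (n + 1)) (Fin (n + 1)) ℂ => M i 0 :=
    (LinearMap.toContinuousLinearMap (entryLinearMap ℂ ℂ i 0)).differentiable
  have heq : (fun ζ => transferVector U ζ i) = fun ζ => (U - ζ • tailProjection n)⁻¹ i 0 := by
    ext
    simp [transferVector]
  rw [heq]
  exact (hentry.differentiableAt.comp ζ hinv).differentiableWithinAt

end

end Transfer

theorem exists_isometry_of_unitary_general (n : ℕ)
    (U : Matrix (Fin (n + 1)) (Fin (n + 1)) ℂ)
    (hU : U ∈ Matrix.unitaryGroup (Fin (n + 1)) ℂ) :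
    ∃ (f₁ : ℂ → ℂ) (f₂ : Fin n → ℂ → ℂ),
      DifferentiableOn ℂ f₁ (Metric.ball 0 1) ∧
      (∀ j, DifferentiableOn ℂ (f₂ j) (Metric.ball 0 1)) ∧
      (∀ w ∈ Metric.ball (0 : ℂ) 1, ‖f₁ w‖ < 1) ∧
      (∀ w ∈ Metric.ball (0 : ℂ) 1, ∑ j, ‖f₂ j w‖ ^ 2 < 1) ∧
      f₁ 0 = 0 ∧ (∀ j, f₂ j 0 = 0) ∧
      (∀ w ∈ Metric.ball (0 : ℂ) 1,
        U.mulVec (Fin.cons (f₁ w) (fun j => f₂ j w))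
          = Fin.cons w (fun j => f₁ w * f₂ j w)) ∧
      ∀ w ∈ Metric.ball (0 : ℂ) 1,
        (1 - ‖f₁ w‖ ^ 2) * (1 - ∑ j, ‖f₂ j w‖ ^ 2)
          = 1 - ‖w‖ ^ 2 := by
  obtain ⟨f₁, hf₁, hfix⟩ := exists_differentiableOn_eq_mul_comp
    (differentiableOn_transferVector hU 0)
    fun ζ hζ => mem_closedBall_zero_iff.2 (norm_transferVector_zero_le hU (mem_ball_zero_iff.1 hζ))
  set f₂ : Fin n → ℂ → ℂ := fun j w => w * transferVector U (f₁ w) j.succ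
  have hmulVec : ∀ w ∈ ball (0 : ℂ) 1,
      U *ᵥ Fin.cons (f₁ w) (fun j => f₂ j w) = Fin.cons w (f₁ w • fun j => f₂ j w) :=
    fun w hw => mulVec_cons_mul_transferVector hU (hfix w hw).1 (hfix w hw).2
  have hiso : ∀ w ∈ ball (0 : ℂ) 1, (1 - ‖f₁ w‖ ^ 2) * (1 - ∑ j, ‖f₂ j w‖ ^ 2) = 1 - ‖w‖ ^ 2 :=
    fun w hw => one_sub_sq_norm_mul_one_sub_sum_eq_of_mulVec_cons hU (hmulVec w hw)
  refine ⟨f₁, f₂, hf₁, fun j => ?_, fun w hw => (hfix w hw).1, fun w hw => ?_,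
    by simpa using (hfix 0 (mem_ball_self one_pos)).2, fun j => zero_mul _, hmulVec, hiso⟩
  · exact differentiableOn_id.mul ((differentiableOn_transferVector hU j.succ).comp hf₁
      fun w hw => mem_ball_zero_iff.2 (hfix w hw).1)
  · have h1 : 0 < 1 - ‖f₁ w‖ ^ 2 := by nlinarith [norm_nonneg (f₁ w), (hfix w hw).1]
    have h2 : 0 < 1 - ‖w‖ ^ 2 := by nlinarith [norm_nonneg w, mem_ball_zero_iff.1 hw]
    have := (pos_iff_pos_of_mul_pos (hiso w hw ▸ h2)).1 h1
    linarith

/-- Existence: for every unitary matrix `U ∈ U(n+1)` there is a holomorphic map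
`f = (f₁, f_{2,1}, …, f_{2,n}) : Δ → Δ × 𝔹ⁿ` with `f(0) = 0` satisfying
`U (f₁, f_{2,1}, …, f_{2,n})ᵗ = (w, f₁ f_{2,1}, …, f₁ f_{2,n})ᵗ` on `Δ`; consequently it
satisfies the isometry functional equation
`(1 - |f₁|²)(1 - ∑ |f_{2,j}|²) = 1 - |w|²` on `Δ`. -/
theorem exists_isometry_of_unitary (n : ℕ) (hn : 2 ≤ n)
    (U : Matrix (Fin (n + 1)) (Fin (n + 1)) ℂ)
    (hU : U ∈ Matrix.unitaryGroup (Fin (n + 1)) ℂ) :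
    ∃ (f₁ : ℂ → ℂ) (f₂ : Fin n → ℂ → ℂ),
      DifferentiableOn ℂ f₁ (Metric.ball 0 1) ∧
      (∀ j, DifferentiableOn ℂ (f₂ j) (Metric.ball 0 1)) ∧
      (∀ w ∈ Metric.ball (0 : ℂ) 1, ‖f₁ w‖ < 1) ∧
      (∀ w ∈ Metric.ball (0 : ℂ) 1, ∑ j, ‖f₂ j w‖ ^ 2 < 1) ∧
      f₁ 0 = 0 ∧ (∀ j, f₂ j 0 = 0) ∧
      (∀ w ∈ Metric.ball (0 : ℂ) 1,
        U.mulVec (Fin.cons (f₁ w) (fun j => f₂ j w))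
          = Fin.cons w (fun j => f₁ w * f₂ j w)) ∧
      ∀ w ∈ Metric.ball (0 : ℂ) 1,
        (1 - ‖f₁ w‖ ^ 2) * (1 - ∑ j, ‖f₂ j w‖ ^ 2)
          = 1 - ‖w‖ ^ 2 :=
  exists_isometry_of_unitary_general n U hU
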